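/- Define, for k ∈ (0, k₀), Y₁²(k) = √(2ι₁(k)/k) and W₁²(k) = (ι₂(k) + 4k²ι₁(k))/(3(2kι₁(k))^{3/2}). Then Y₁² is strictly decreasing on (0, k₀) with Y₁²(k) → +∞ as k → 0⁺ and Y₁²(k) → 0 as k → k₀⁻, while W₁² is strictly increasing on (0, k₀) with W₁²(k) → 0 as k → 0⁺ and W₁²(k) → +∞ as k → k₀⁻. Consequently the parametric curve {(Y₁²(k), W₁²(k)) : k ∈ (0, k₀)} is the graph of a function W = W_conj^{21}(Y), positive and strictly decreasing from +∞ to 0 on Y ∈ (0, ∞). -/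

import Mathlib

open Real Set Filter Topology

/-- Complete elliptic integral of the first kind. -/
noncomputable def K (k : ℝ) : ℝ :=
  ∫ t in (0:ℝ)..(π/2), 1 / Real.sqrt (1 - k^2 * Real.sin t ^ 2)

/-- Complete elliptic integral of the second kind. -/
noncomputable def E (k : ℝ) : ℝ :=
  ∫ t in (0:ℝ)..(π/2), Real.sqrt (1 - k^2 * Real.sin t ^ 2)

noncomputable def ι₁ (k : ℝ) : ℝ := 2 * E k - K k

noncomputable def ι₂ (k : ℝ) : ℝ := K k - E k

noncomputable def Y12 (k : ℝ) : ℝ := Real.sqrt (2 * ι₁ k / k)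

noncomputable def W12 (k : ℝ) : ℝ :=
  (ι₂ k + 4 * k^2 * ι₁ k) / (3 * (2 * k * ι₁ k) ^ ((3:ℝ)/2))

/-!
Differentiating under the integral sign gives the classical formulas `E' = (E - K) / k` and
`K' = (E - (1 - k²) K) / (k (1 - k²))`; the latter uses `(1 - k²) ∫ w^(-3/2) = E` for
`w = 1 - k² sin² t`, obtained by integrating the derivative of `k² sin t cos t / √w` over
`[0, π/2]`. Hence `ι₂' = k E / (1 - k²) > 0` and `ι₁' = -(ι₂ / k + k E / (1 - k²)) < 0`, so
`ι₂ > 0` on `(0, 1)` and `ι₁ > 0` on `[0, k₀)`. Then `(Y₁²)² = 2 ι₁ / k` is a product of positive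
decreasing factors, and `W₁²'` has the sign of `2 ι₁ (E - (1 - k²) K) + ι₂ E > 0`. At `k₀` the
limits come from `ι₁(k₀) = 0`; at `0`, the bound `ι₂ ≤ k² K` gives `W₁² = O(√k)`.
Finally `Y₁²` maps `(0, k₀)` decreasingly onto `(0, ∞)`, and `W_conj = W₁² ∘ (Y₁²)⁻¹`.
-/

open Function

section ParametricCurve

variable {Y W : ℝ → ℝ} {a b : ℝ}

theorem image_Ioo_eq_Ioi_of_tendsto (hab : a < b) (hpos : ∀ x ∈ Ioo a b, 0 < Y x)
    (hcont : ContinuousOn Y (Ioo a b)) (ha : Tendsto Y (𝓝[>] a) atTop)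
    (hb : Tendsto Y (𝓝[<] b) (𝓝 0)) : Y '' Ioo a b = Ioi 0 :=
  (image_subset_iff.2 hpos).antisymm <| isPreconnected_Ioo.intermediate_value_Ioi
    (le_principal_iff.2 (Ioo_mem_nhdsLT hab)) (le_principal_iff.2 (Ioo_mem_nhdsGT hab))
    hcont hb ha

theorem StrictAntiOn.lt_invFunOn_iff (hY : StrictAntiOn Y (Ioo a b))
    (hYim : Y '' Ioo a b = Ioi 0) {x y : ℝ} (hx : x ∈ Ioo a b) (hy : 0 < y) :
    x < invFunOn Y (Ioo a b) y ↔ y < Y x := by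
  have hsurj : SurjOn Y (Ioo a b) (Ioi 0) := hYim.ge
  rw [← hY.lt_iff_gt (hsurj.mapsTo_invFunOn hy) hx, hsurj.rightInvOn_invFunOn hy]

theorem StrictAntiOn.invFunOn_lt_iff (hY : StrictAntiOn Y (Ioo a b))
    (hYim : Y '' Ioo a b = Ioi 0) {x y : ℝ} (hx : x ∈ Ioo a b) (hy : 0 < y) :
    invFunOn Y (Ioo a b) y < x ↔ Y x < y := by
  have hsurj : SurjOn Y (Ioo a b) (Ioi 0) := hYim.ge
  rw [← hY.lt_iff_gt hx (hsurj.mapsTo_invFunOn hy), hsurj.rightInvOn_invFunOn hy]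

theorem StrictAntiOn.strictAntiOn_invFunOn (hY : StrictAntiOn Y (Ioo a b))
    (hYim : Y '' Ioo a b = Ioi 0) : StrictAntiOn (invFunOn Y (Ioo a b)) (Ioi 0) := by
  intro y₁ hy₁ y₂ hy₂ hlt
  have hsurj : SurjOn Y (Ioo a b) (Ioi 0) := hYim.ge
  rw [hY.invFunOn_lt_iff hYim (hsurj.mapsTo_invFunOn hy₁) hy₂, hsurj.rightInvOn_invFunOn hy₁]
  exact hlt

theorem StrictAntiOn.tendsto_invFunOn_nhdsGT_zero (hY : StrictAntiOn Y (Ioo a b))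
    (hYim : Y '' Ioo a b = Ioi 0) :
    Tendsto (invFunOn Y (Ioo a b)) (𝓝[>] 0) (𝓝[<] b) := by
  have hmaps : MapsTo (invFunOn Y (Ioo a b)) (Ioi 0) (Ioo a b) :=
    SurjOn.mapsTo_invFunOn hYim.ge
  have hab : a < b := nonempty_Ioo.1 (image_nonempty.1 (hYim ▸ nonempty_Ioi))
  refine (nhdsLT_basis b).tendsto_right_iff.2 fun l hl => ?_
  obtain ⟨x, hx, hxb⟩ := exists_between (max_lt hab hl)
  have hxs : x ∈ Ioo a b := ⟨(le_max_left a l).trans_lt hx, hxb⟩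
  have hYx : 0 < Y x := hYim.le (mem_image_of_mem Y hxs)
  filter_upwards [Ioo_mem_nhdsGT hYx] with y hy
  exact ⟨((le_max_right a l).trans_lt hx).trans ((hY.lt_invFunOn_iff hYim hxs hy.1).2 hy.2),
    (hmaps hy.1).2⟩

theorem StrictAntiOn.tendsto_invFunOn_atTop (hY : StrictAntiOn Y (Ioo a b))
    (hYim : Y '' Ioo a b = Ioi 0) :
    Tendsto (invFunOn Y (Ioo a b)) atTop (𝓝[>] a) := by
  have hmaps : MapsTo (invFunOn Y (Ioo a b)) (Ioi 0) (Ioo a b) :=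
    SurjOn.mapsTo_invFunOn hYim.ge
  have hab : a < b := nonempty_Ioo.1 (image_nonempty.1 (hYim ▸ nonempty_Ioi))
  refine (nhdsGT_basis a).tendsto_right_iff.2 fun u hu => ?_
  obtain ⟨x, hax, hx⟩ := exists_between (lt_min hab hu)
  have hxs : x ∈ Ioo a b := ⟨hax, hx.trans_le (min_le_left b u)⟩
  have hYx : 0 < Y x := hYim.le (mem_image_of_mem Y hxs)
  filter_upwards [eventually_gt_atTop (Y x)] with y hy
  exact ⟨(hmaps (hYx.trans hy)).1,
    ((hY.invFunOn_lt_iff hYim hxs (hYx.trans hy)).2 hy).trans (hx.trans_le (min_le_right b u))⟩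

theorem StrictAntiOn.exists_graph_eq_image (hY : StrictAntiOn Y (Ioo a b))
    (hYim : Y '' Ioo a b = Ioi 0) (hW : StrictMonoOn W (Ioo a b))
    (hWpos : ∀ x ∈ Ioo a b, 0 < W x) (hWa : Tendsto W (𝓝[>] a) (𝓝 0))
    (hWb : Tendsto W (𝓝[<] b) atTop) :
    ∃ V : ℝ → ℝ, (∀ y ∈ Ioi 0, 0 < V y) ∧ StrictAntiOn V (Ioi 0) ∧
      Tendsto V (𝓝[>] 0) atTop ∧ Tendsto V atTop (𝓝 0) ∧
      (fun x => (Y x, W x)) '' Ioo a b = (fun y => (y, V y)) '' Ioi 0 := by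
  set g := invFunOn Y (Ioo a b)
  have hsurj : SurjOn Y (Ioo a b) (Ioi 0) := hYim.ge
  have hright : ∀ y ∈ Ioi 0, Y (g y) = y := hsurj.rightInvOn_invFunOn
  refine ⟨W ∘ g, fun y hy => hWpos _ (hsurj.mapsTo_invFunOn hy),
    hW.comp_strictAntiOn (hY.strictAntiOn_invFunOn hYim) hsurj.mapsTo_invFunOn,
    hWb.comp (hY.tendsto_invFunOn_nhdsGT_zero hYim), hWa.comp (hY.tendsto_invFunOn_atTop hYim),
    ?_⟩
  calc (fun x => (Y x, W x)) '' Ioo a b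
      = (fun x => (Y x, W x)) '' (g '' (Y '' Ioo a b)) := by
        rw [hY.injOn.invFunOn_image subset_rfl]
    _ = (fun y => (y, (W ∘ g) y)) '' Ioi 0 := by
      rw [image_image, hYim]
      exact image_congr fun y hy => by simp only [hright y hy, Function.comp]

end ParametricCurve

section ParametricIntegral

variable {g g' φ : ℝ → ℝ}

lemma sq_mul_mem_Icc {x R φ : ℝ} (hx : x ^ 2 ≤ R) (hφ : φ ∈ Icc (0:ℝ) 1) :
    x ^ 2 * φ ∈ Icc 0 R :=
  ⟨mul_nonneg (sq_nonneg x) hφ.1, (mul_le_of_le_one_right (sq_nonneg x) hφ.2).trans hx⟩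

theorem continuous_comp_sq_mul (hg : ContinuousOn g (Iio 1)) (hφ : Continuous φ)
    (hφ1 : ∀ t, φ t ∈ Icc 0 1) {k : ℝ} (hk : |k| < 1) : Continuous fun t => g (k ^ 2 * φ t) :=
  hg.comp_continuous (by fun_prop) fun t =>
    (sq_mul_mem_Icc le_rfl (hφ1 t)).2.trans_lt ((sq_lt_one_iff_abs_lt_one k).2 hk)

theorem hasDerivAt_integral_comp_sq_mul (hg : ∀ x < 1, HasDerivAt g (g' x) x)
    (hg' : ContinuousOn g' (Iio 1)) (hφ : Continuous φ) (hφ1 : ∀ t, φ t ∈ Icc 0 1)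
    (a b : ℝ) {k : ℝ} (hk : |k| < 1) :
    HasDerivAt (fun k => ∫ t in a..b, g (k ^ 2 * φ t))
      (∫ t in a..b, g' (k ^ 2 * φ t) * (2 * k * φ t)) k := by
  obtain ⟨r, hkr, hr1⟩ := exists_between hk
  have hball : Metric.ball k (r - |k|) ∈ 𝓝 k := Metric.ball_mem_nhds k (by linarith)
  have habs : ∀ x ∈ Metric.ball k (r - |k|), |x| < r := fun x hx => by
    have := abs_sub_abs_le_abs_sub x k
    rw [Metric.mem_ball, Real.dist_eq] at hx
    linarith
  have hsq : ∀ x ∈ Metric.ball k (r - |k|), x ^ 2 ≤ r ^ 2 := fun x hx =>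
    sq_le_sq' (by linarith [neg_abs_le x, habs x hx]) ((le_abs_self x).trans (habs x hx).le)
  have hr2 : r ^ 2 < 1 := pow_lt_one₀ (by linarith [abs_nonneg k]) hr1 two_ne_zero
  have hgc : ContinuousOn g (Iio 1) := fun x hx => (hg x hx).continuousAt.continuousWithinAt
  obtain ⟨C, hC⟩ := isCompact_Icc.exists_bound_of_continuousOn
    (hg'.mono fun x (hx : x ∈ Icc 0 (r ^ 2)) => hx.2.trans_lt hr2)
  refine (intervalIntegral.hasDerivAt_integral_of_dominated_loc_of_deriv_le
    (F := fun x t => g (x ^ 2 * φ t)) (F' := fun x t => g' (x ^ 2 * φ t) * (2 * x * φ t))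
    (bound := fun _ => C * (2 * r)) hball ?_ ?_ ?_ ?_ intervalIntegrable_const ?_).2
  · filter_upwards [hball] with x hx
    exact (continuous_comp_sq_mul hgc hφ hφ1 ((habs x hx).trans hr1)).aestronglyMeasurable
  · exact (continuous_comp_sq_mul hgc hφ hφ1 hk).intervalIntegrable _ _
  · exact ((continuous_comp_sq_mul hg' hφ hφ1 hk).mul (by fun_prop)).aestronglyMeasurable
  · refine Filter.Eventually.of_forall fun t _ x hx => ?_
    rw [norm_mul]
    refine mul_le_mul (hC _ (sq_mul_mem_Icc (hsq x hx) (hφ1 t))) ?_ (norm_nonneg _)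
      ((norm_nonneg _).trans (hC _ (sq_mul_mem_Icc (hsq x hx) (hφ1 t))))
    rw [Real.norm_eq_abs, abs_mul, abs_mul, abs_two, abs_of_nonneg (hφ1 t).1]
    nlinarith [habs x hx, (hφ1 t).2, (hφ1 t).1, abs_nonneg x]
  · refine Filter.Eventually.of_forall fun t _ x hx => ?_
    have hx1 : x ^ 2 * φ t < 1 := (sq_mul_mem_Icc (hsq x hx) (hφ1 t)).2.trans_lt hr2
    exact ((hg _ hx1).comp x ((hasDerivAt_pow 2 x).mul_const (φ t))).congr_deriv
      (by push_cast; ring)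

end ParametricIntegral

section EllipticIntegrals

variable {k : ℝ}

lemma abs_lt_one_of_mem_Ico (hk : k ∈ Ico (0:ℝ) 1) : |k| < 1 :=
  abs_lt.2 ⟨by linarith [hk.1], hk.2⟩

lemma sin_sq_mem_Icc (t : ℝ) : sin t ^ 2 ∈ Icc (0:ℝ) 1 := ⟨sq_nonneg _, sin_sq_le_one t⟩

lemma one_sub_sq_pos (hk : |k| < 1) : 0 < 1 - k ^ 2 :=
  sub_pos.2 ((sq_lt_one_iff_abs_lt_one k).2 hk)

lemma one_sub_sq_mul_sin_sq_pos (hk : |k| < 1) (t : ℝ) : 0 < 1 - k ^ 2 * sin t ^ 2 := by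
  have := (sq_mul_mem_Icc (x := k) le_rfl (sin_sq_mem_Icc t)).2
  have := (sq_lt_one_iff_abs_lt_one k).2 hk
  linarith

lemma hasDerivAt_sqrt_one_sub {x : ℝ} (hx : x < 1) :
    HasDerivAt (fun x => √(1 - x)) (-1 / (2 * √(1 - x))) x :=
  ((hasDerivAt_id x).const_sub 1).sqrt (sub_pos.2 hx).ne'

lemma hasDerivAt_one_div_sqrt_one_sub {x : ℝ} (hx : x < 1) :
    HasDerivAt (fun x => 1 / √(1 - x)) (1 / (2 * (1 - x) * √(1 - x))) x := by
  have hs : 0 < √(1 - x) := sqrt_pos.2 (by linarith)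
  refine ((hasDerivAt_const x 1).div (hasDerivAt_sqrt_one_sub hx) hs.ne').congr_deriv ?_
  rw [sq_sqrt (by linarith : 0 ≤ 1 - x)]
  field_simp
  ring

lemma hasDerivAt_E_integral (hk : |k| < 1) :
    HasDerivAt E (∫ t in 0..π/2, -1 / (2 * √(1 - k ^ 2 * sin t ^ 2)) * (2 * k * sin t ^ 2)) k :=
  hasDerivAt_integral_comp_sq_mul (fun _ hx => hasDerivAt_sqrt_one_sub hx)
    (continuousOn_const.div (by fun_prop) fun x hx =>
      (mul_pos two_pos (sqrt_pos.2 (sub_pos.2 hx))).ne') (by fun_prop) sin_sq_mem_Icc 0 (π / 2) hk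

lemma hasDerivAt_K_integral (hk : |k| < 1) :
    HasDerivAt K (∫ t in 0..π/2, 1 / (2 * (1 - k ^ 2 * sin t ^ 2) * √(1 - k ^ 2 * sin t ^ 2)) *
      (2 * k * sin t ^ 2)) k :=
  hasDerivAt_integral_comp_sq_mul (fun _ hx => hasDerivAt_one_div_sqrt_one_sub hx)
    (continuousOn_const.div (by fun_prop) fun x hx =>
      (mul_pos (mul_pos two_pos (sub_pos.2 hx)) (sqrt_pos.2 (sub_pos.2 hx))).ne')
    (by fun_prop) sin_sq_mem_Icc 0 (π / 2) hk

lemma continuous_sqrt_one_sub_sq_mul_sin_sq (k : ℝ) :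
    Continuous fun t => √(1 - k ^ 2 * sin t ^ 2) := by fun_prop

lemma continuous_one_div_sqrt (hk : |k| < 1) :
    Continuous fun t => 1 / √(1 - k ^ 2 * sin t ^ 2) :=
  continuous_comp_sq_mul (g := fun x => 1 / √(1 - x))
    (fun _ hx => (hasDerivAt_one_div_sqrt_one_sub hx).continuousAt.continuousWithinAt)
    (by fun_prop) sin_sq_mem_Icc hk

lemma continuous_one_div_mul_sqrt (hk : |k| < 1) :
    Continuous fun t => 1 / ((1 - k ^ 2 * sin t ^ 2) * √(1 - k ^ 2 * sin t ^ 2)) :=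
  continuous_const.div (by fun_prop) fun t =>
    (mul_pos (one_sub_sq_mul_sin_sq_pos hk t) (sqrt_pos.2 (one_sub_sq_mul_sin_sq_pos hk t))).ne'

lemma hasDerivAt_sq_mul_sin_mul_cos_div_sqrt (hk : |k| < 1) (t : ℝ) :
    HasDerivAt (fun t => k ^ 2 * sin t * cos t / √(1 - k ^ 2 * sin t ^ 2))
      (√(1 - k ^ 2 * sin t ^ 2) -
        (1 - k ^ 2) * (1 / ((1 - k ^ 2 * sin t ^ 2) * √(1 - k ^ 2 * sin t ^ 2)))) t := by
  have hw := one_sub_sq_mul_sin_sq_pos hk t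
  have hq := sqrt_pos.2 hw
  have hnum := ((hasDerivAt_sin t).const_mul (k ^ 2)).fun_mul (hasDerivAt_cos t)
  have hden := (((hasDerivAt_sin t).fun_pow 2).const_mul (k ^ 2)).const_sub 1 |>.sqrt hw.ne'
  refine (hnum.fun_div hden hq.ne').congr_deriv ?_
  rw [sq_sqrt hw.le]
  field_simp
  norm_num
  linear_combination (2 * k ^ 2 * (cos t ^ 2 - sin t ^ 2) - 2 * (1 - k ^ 2 * sin t ^ 2)) *
    sq_sqrt hw.le + 2 * k ^ 2 * cos_sq_add_sin_sq t

lemma integral_one_div_mul_sqrt (hk : |k| < 1) :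
    ∫ t in 0..π/2, 1 / ((1 - k ^ 2 * sin t ^ 2) * √(1 - k ^ 2 * sin t ^ 2)) =
      E k / (1 - k ^ 2) := by
  have h1k : 1 - k ^ 2 ≠ 0 := (one_sub_sq_pos hk).ne'
  have hFTC := intervalIntegral.integral_eq_sub_of_hasDerivAt
    (fun t _ => hasDerivAt_sq_mul_sin_mul_cos_div_sqrt hk t)
    (((continuous_sqrt_one_sub_sq_mul_sin_sq k).sub
      (continuous_const.mul (continuous_one_div_mul_sqrt hk))).intervalIntegrable 0 (π / 2))
  rw [intervalIntegral.integral_sub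
    ((continuous_sqrt_one_sub_sq_mul_sin_sq k).intervalIntegrable _ _)
    (((continuous_one_div_mul_sqrt hk).intervalIntegrable _ _).const_mul _),
    intervalIntegral.integral_const_mul] at hFTC
  simp only [sin_zero, cos_pi_div_two, mul_zero, zero_mul, zero_div, sub_zero] at hFTC
  rw [eq_div_iff h1k]
  change E k - _ = 0 at hFTC
  linarith

lemma hasDerivAt_E (hk0 : k ≠ 0) (hk : |k| < 1) : HasDerivAt E ((E k - K k) / k) k := by
  convert hasDerivAt_E_integral hk using 1
  have hpt : ∀ t, -1 / (2 * √(1 - k ^ 2 * sin t ^ 2)) * (2 * k * sin t ^ 2) =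
      k⁻¹ * √(1 - k ^ 2 * sin t ^ 2) - k⁻¹ * (1 / √(1 - k ^ 2 * sin t ^ 2)) := fun t => by
    have hw := one_sub_sq_mul_sin_sq_pos hk t
    have hq := (sqrt_pos.2 hw).ne'
    field_simp
    linear_combination -sq_sqrt hw.le
  simp_rw [hpt]
  rw [intervalIntegral.integral_sub
    (((continuous_sqrt_one_sub_sq_mul_sin_sq k).intervalIntegrable _ _).const_mul _)
    (((continuous_one_div_sqrt hk).intervalIntegrable _ _).const_mul _),
    intervalIntegral.integral_const_mul, intervalIntegral.integral_const_mul]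
  simp only [E, K]
  ring

lemma hasDerivAt_K (hk0 : k ≠ 0) (hk : |k| < 1) :
    HasDerivAt K ((E k - (1 - k ^ 2) * K k) / (k * (1 - k ^ 2))) k := by
  convert hasDerivAt_K_integral hk using 1
  have h1k : 1 - k ^ 2 ≠ 0 := (one_sub_sq_pos hk).ne'
  have hpt : ∀ t, 1 / (2 * (1 - k ^ 2 * sin t ^ 2) * √(1 - k ^ 2 * sin t ^ 2)) *
      (2 * k * sin t ^ 2) = k⁻¹ * (1 / ((1 - k ^ 2 * sin t ^ 2) * √(1 - k ^ 2 * sin t ^ 2))) -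
        k⁻¹ * (1 / √(1 - k ^ 2 * sin t ^ 2)) := fun t => by
    have hw := one_sub_sq_mul_sin_sq_pos hk t
    have hq := (sqrt_pos.2 hw).ne'
    field_simp
    ring
  simp_rw [hpt]
  rw [intervalIntegral.integral_sub
    (((continuous_one_div_mul_sqrt hk).intervalIntegrable _ _).const_mul _)
    (((continuous_one_div_sqrt hk).intervalIntegrable _ _).const_mul _),
    intervalIntegral.integral_const_mul, intervalIntegral.integral_const_mul,
    integral_one_div_mul_sqrt hk]
  simp only [K]
  field_simp

lemma E_pos (hk : |k| < 1) : 0 < E k :=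
  intervalIntegral.intervalIntegral_pos_of_pos
    ((continuous_sqrt_one_sub_sq_mul_sin_sq k).intervalIntegrable _ _)
    (fun t => sqrt_pos.2 (one_sub_sq_mul_sin_sq_pos hk t)) (by positivity)

lemma one_sub_sq_mul_K_le_E (hk : |k| < 1) : (1 - k ^ 2) * K k ≤ E k := by
  rw [K, ← intervalIntegral.integral_const_mul]
  refine intervalIntegral.integral_mono_on (by positivity)
    (((continuous_one_div_sqrt hk).intervalIntegrable _ _).const_mul _)
    ((continuous_sqrt_one_sub_sq_mul_sin_sq k).intervalIntegrable _ _) fun t _ => ?_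
  have hw := one_sub_sq_mul_sin_sq_pos hk t
  rw [mul_one_div, div_le_iff₀ (sqrt_pos.2 hw), ← sq, sq_sqrt hw.le]
  nlinarith [sin_sq_le_one t, sq_nonneg k]

lemma K_zero : K 0 = π / 2 := by simp [K]

lemma E_zero : E 0 = π / 2 := by simp [E]

lemma continuousAt_E (hk : |k| < 1) : ContinuousAt E k :=
  (hasDerivAt_E_integral hk).continuousAt

lemma continuousAt_K (hk : |k| < 1) : ContinuousAt K k :=
  (hasDerivAt_K_integral hk).continuousAt

end EllipticIntegrals

section IotaFunctions

variable {k : ℝ}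

lemma continuousAt_ι₁ (hk : |k| < 1) : ContinuousAt ι₁ k :=
  (continuousAt_const.mul (continuousAt_E hk)).sub (continuousAt_K hk)

lemma continuousAt_ι₂ (hk : |k| < 1) : ContinuousAt ι₂ k :=
  (continuousAt_K hk).sub (continuousAt_E hk)

lemma hasDerivAt_ι₂ (hk0 : k ≠ 0) (hk : |k| < 1) :
    HasDerivAt ι₂ (k * E k / (1 - k ^ 2)) k := by
  have h1k : 1 - k ^ 2 ≠ 0 := (one_sub_sq_pos hk).ne'
  refine ((hasDerivAt_K hk0 hk).sub (hasDerivAt_E hk0 hk)).congr_deriv ?_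
  field_simp
  ring

lemma hasDerivAt_ι₁ (hk0 : k ≠ 0) (hk : |k| < 1) :
    HasDerivAt ι₁ (-(ι₂ k / k + k * E k / (1 - k ^ 2))) k := by
  have h1k : 1 - k ^ 2 ≠ 0 := (one_sub_sq_pos hk).ne'
  refine (((hasDerivAt_E hk0 hk).const_mul 2).sub (hasDerivAt_K hk0 hk)).congr_deriv ?_
  rw [ι₂]
  field_simp
  ring

lemma strictMonoOn_ι₂ : StrictMonoOn ι₂ (Ico 0 1) := by
  refine strictMonoOn_of_deriv_pos (convex_Ico 0 1)
    (fun x hx => (continuousAt_ι₂ (abs_lt_one_of_mem_Ico hx)).continuousWithinAt) fun x hx => ?_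
  rw [interior_Ico] at hx
  have hx1 := abs_lt_one_of_mem_Ico (Ioo_subset_Ico_self hx)
  rw [(hasDerivAt_ι₂ hx.1.ne' hx1).deriv]
  exact div_pos (mul_pos hx.1 (E_pos hx1)) (one_sub_sq_pos hx1)

lemma ι₂_pos (hk : k ∈ Ioo 0 1) : 0 < ι₂ k := by
  simpa [ι₂, K_zero, E_zero] using
    strictMonoOn_ι₂ (left_mem_Ico.2 one_pos) (Ioo_subset_Ico_self hk) hk.1

lemma strictAntiOn_ι₁ : StrictAntiOn ι₁ (Ico 0 1) := by
  refine strictAntiOn_of_deriv_neg (convex_Ico 0 1)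
    (fun x hx => (continuousAt_ι₁ (abs_lt_one_of_mem_Ico hx)).continuousWithinAt) fun x hx => ?_
  rw [interior_Ico] at hx
  have hx1 := abs_lt_one_of_mem_Ico (Ioo_subset_Ico_self hx)
  rw [(hasDerivAt_ι₁ hx.1.ne' hx1).deriv, neg_lt_zero]
  exact add_pos (div_pos (ι₂_pos hx) hx.1)
    (div_pos (mul_pos hx.1 (E_pos hx1)) (one_sub_sq_pos hx1))

lemma ι₁_pos {k₀ : ℝ} (hk₀ : k₀ < 1) (hroot : ι₁ k₀ = 0) (hk : k ∈ Ico 0 k₀) : 0 < ι₁ k :=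
  hroot ▸ strictAntiOn_ι₁ ⟨hk.1, hk.2.trans hk₀⟩ ⟨hk.1.trans hk.2.le, hk₀⟩ hk.2

end IotaFunctions

section Y12

variable {k k₀ : ℝ}

lemma continuousAt_Y12 (hk0 : k ≠ 0) (hk : |k| < 1) : ContinuousAt Y12 k :=
  ((continuousAt_const.mul (continuousAt_ι₁ hk)).div continuousAt_id hk0).sqrt

lemma Y12_pos (hk₀ : k₀ < 1) (hroot : ι₁ k₀ = 0) (hk : k ∈ Ioo 0 k₀) : 0 < Y12 k :=
  sqrt_pos.2 (div_pos (mul_pos two_pos (ι₁_pos hk₀ hroot (Ioo_subset_Ico_self hk))) hk.1)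

lemma strictAntiOn_Y12 (hk₀ : k₀ < 1) (hroot : ι₁ k₀ = 0) : StrictAntiOn Y12 (Ioo 0 k₀) := by
  intro a ha b hb hab
  have hιa := ι₁_pos hk₀ hroot (Ioo_subset_Ico_self ha)
  have hιb := ι₁_pos hk₀ hroot (Ioo_subset_Ico_self hb)
  have hι := strictAntiOn_ι₁ ⟨ha.1.le, ha.2.trans hk₀⟩ ⟨hb.1.le, hb.2.trans hk₀⟩ hab
  refine sqrt_lt_sqrt (by positivity [hb.1]) ?_
  calc 2 * ι₁ b / b < 2 * ι₁ a / b := by gcongr; exact hb.1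
    _ < 2 * ι₁ a / a := by gcongr; exact ha.1

lemma tendsto_Y12_nhdsGT_zero : Tendsto Y12 (𝓝[>] 0) atTop := by
  have h0 : ι₁ 0 = π / 2 := by rw [ι₁, K_zero, E_zero]; ring
  have hι : Tendsto ι₁ (𝓝[>] 0) (𝓝 (π / 2)) :=
    (h0 ▸ (continuousAt_ι₁ (by simp)).tendsto).mono_left nhdsWithin_le_nhds
  exact tendsto_sqrt_atTop.comp <| ((hι.const_mul 2).pos_mul_atTop (by positivity)
    tendsto_inv_nhdsGT_zero).congr fun k => (div_eq_mul_inv _ _).symm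

lemma tendsto_Y12_nhdsLT (hk₀ : k₀ ∈ Ioo 0 1) (hroot : ι₁ k₀ = 0) :
    Tendsto Y12 (𝓝[<] k₀) (𝓝 0) := by
  have := (continuousAt_Y12 hk₀.1.ne' (abs_lt_one_of_mem_Ico (Ioo_subset_Ico_self hk₀))).tendsto
  rw [Y12, hroot, mul_zero, zero_div, sqrt_zero] at this
  exact this.mono_left nhdsWithin_le_nhds

end Y12

section W12

variable {k k₀ : ℝ}

noncomputable def W12num (k : ℝ) : ℝ := ι₂ k + 4 * k ^ 2 * ι₁ k

noncomputable def W12base (k : ℝ) : ℝ := 2 * k * ι₁ k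

lemma W12_eq_div : W12 = fun k => W12num k / (3 * W12base k ^ (3 / 2 : ℝ)) := rfl

lemma hasDerivAt_W12num (hk0 : k ≠ 0) (hk : |k| < 1) :
    HasDerivAt W12num (3 * k * (4 * ι₁ k - E k / (1 - k ^ 2))) k := by
  have h1k := (one_sub_sq_pos hk).ne'
  refine ((hasDerivAt_ι₂ hk0 hk).add (((hasDerivAt_pow 2 k).const_mul 4).mul
    (hasDerivAt_ι₁ hk0 hk))).congr_deriv ?_
  simp only [ι₁, ι₂]
  field_simp
  ring

lemma hasDerivAt_W12base (hk0 : k ≠ 0) (hk : |k| < 1) :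
    HasDerivAt W12base (2 * (2 * ι₁ k - E k / (1 - k ^ 2))) k := by
  have h1k := (one_sub_sq_pos hk).ne'
  refine (((hasDerivAt_id' k).const_mul 2).mul (hasDerivAt_ι₁ hk0 hk)).congr_deriv ?_
  simp only [ι₁, ι₂]
  field_simp
  ring

lemma hasDerivAt_W12 (hk0 : k ≠ 0) (hk : |k| < 1) (hB : 0 < W12base k) :
    HasDerivAt W12 ((2 * ι₁ k * (E k - (1 - k ^ 2) * K k) + ι₂ k * E k) /
      ((1 - k ^ 2) * W12base k * W12base k ^ (3 / 2 : ℝ))) k := by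
  have h1k := (one_sub_sq_pos hk).ne'
  have hp := rpow_pos_of_pos hB (3 / 2)
  rw [W12_eq_div]
  refine ((hasDerivAt_W12num hk0 hk).div (((hasDerivAt_W12base hk0 hk).rpow_const
    (Or.inl hB.ne')).const_mul 3) (by positivity)).congr_deriv ?_
  rw [rpow_sub_one hB.ne']
  generalize W12base k ^ (3 / 2 : ℝ) = p at hp ⊢
  have hι : ι₁ k ≠ 0 := by rintro h; simp [W12base, h] at hB
  simp only [W12num, W12base, ι₁, ι₂] at hι ⊢
  field_simp
  ring

lemma continuousAt_W12num (hk : |k| < 1) : ContinuousAt W12num k :=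
  (continuousAt_ι₂ hk).add ((continuousAt_const.mul (continuousAt_id.pow 2)).mul
    (continuousAt_ι₁ hk))

lemma continuousAt_W12base (hk : |k| < 1) : ContinuousAt W12base k :=
  (continuousAt_const.mul continuousAt_id).mul (continuousAt_ι₁ hk)

lemma W12base_pos (hk₀ : k₀ < 1) (hroot : ι₁ k₀ = 0) (hk : k ∈ Ioo 0 k₀) : 0 < W12base k :=
  mul_pos (mul_pos two_pos hk.1) (ι₁_pos hk₀ hroot (Ioo_subset_Ico_self hk))

lemma W12num_pos (hk₀ : k₀ < 1) (hroot : ι₁ k₀ = 0) (hk : k ∈ Ioo 0 k₀) : 0 < W12num k := by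
  have := ι₁_pos hk₀ hroot (Ioo_subset_Ico_self hk)
  have := ι₂_pos ⟨hk.1, hk.2.trans hk₀⟩
  unfold W12num
  positivity

lemma W12_pos (hk₀ : k₀ < 1) (hroot : ι₁ k₀ = 0) (hk : k ∈ Ioo 0 k₀) : 0 < W12 k :=
  div_pos (W12num_pos hk₀ hroot hk)
    (mul_pos three_pos (rpow_pos_of_pos (W12base_pos hk₀ hroot hk) _))

lemma strictMonoOn_W12 (hk₀ : k₀ < 1) (hroot : ι₁ k₀ = 0) : StrictMonoOn W12 (Ioo 0 k₀) := by
  have hk1 : ∀ x ∈ Ioo 0 k₀, |x| < 1 := fun x hx =>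
    abs_lt_one_of_mem_Ico ⟨hx.1.le, hx.2.trans hk₀⟩
  have hderiv := fun x (hx : x ∈ Ioo 0 k₀) =>
    hasDerivAt_W12 hx.1.ne' (hk1 x hx) (W12base_pos hk₀ hroot hx)
  refine strictMonoOn_of_deriv_pos (convex_Ioo 0 k₀)
    (fun x hx => (hderiv x hx).continuousAt.continuousWithinAt) fun x hx => ?_
  rw [interior_Ioo] at hx
  rw [(hderiv x hx).deriv]
  have := ι₁_pos hk₀ hroot (Ioo_subset_Ico_self hx)
  have := ι₂_pos ⟨hx.1, hx.2.trans hk₀⟩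
  have := E_pos (hk1 x hx)
  have := sub_nonneg.2 (one_sub_sq_mul_K_le_E (hk1 x hx))
  have := one_sub_sq_pos (hk1 x hx)
  have := W12base_pos hk₀ hroot hx
  positivity

lemma tendsto_W12_nhdsLT (hk₀ : k₀ ∈ Ioo 0 1) (hroot : ι₁ k₀ = 0) :
    Tendsto W12 (𝓝[<] k₀) atTop := by
  have hk₀1 : |k₀| < 1 := abs_lt_one_of_mem_Ico (Ioo_subset_Ico_self hk₀)
  have hIoo : Ioo 0 k₀ ∈ 𝓝[<] k₀ := Ioo_mem_nhdsLT hk₀.1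
  have hnum : Tendsto W12num (𝓝[<] k₀) (𝓝 (ι₂ k₀)) := by
    have h : W12num k₀ = ι₂ k₀ := by simp [W12num, hroot]
    exact (h ▸ (continuousAt_W12num hk₀1).tendsto).mono_left nhdsWithin_le_nhds
  have hden : Tendsto (fun k => 3 * W12base k ^ (3 / 2 : ℝ)) (𝓝[<] k₀) (𝓝[>] 0) := by
    refine tendsto_nhdsWithin_iff.2 ⟨?_, ?_⟩
    · have hc : ContinuousAt (fun k => 3 * W12base k ^ (3 / 2 : ℝ)) k₀ :=
        continuousAt_const.mul ((continuousAt_W12base hk₀1).rpow_const (Or.inr (by norm_num)))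
      have h : 3 * W12base k₀ ^ (3 / 2 : ℝ) = 0 := by simp [W12base, hroot]
      exact (h ▸ hc.tendsto).mono_left nhdsWithin_le_nhds
    · filter_upwards [hIoo] with k hk
      exact mul_pos three_pos (rpow_pos_of_pos (W12base_pos hk₀.2 hroot hk) _)
  exact (hnum.pos_mul_atTop (ι₂_pos hk₀) hden.inv_tendsto_nhdsGT_zero).congr fun k =>
    (div_eq_mul_inv _ _).symm

lemma W12_le_rpow_half_mul (hk₀ : k₀ < 1) (hroot : ι₁ k₀ = 0) (hk : k ∈ Ioo 0 k₀) :
    W12 k ≤ k ^ (1 / 2 : ℝ) * ((K k + 4 * ι₁ k) / (3 * (2 * ι₁ k) ^ (3 / 2 : ℝ))) := by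
  have hk1 : |k| < 1 := abs_lt_one_of_mem_Ico ⟨hk.1.le, hk.2.trans hk₀⟩
  have hι := ι₁_pos hk₀ hroot (Ioo_subset_Ico_self hk)
  have hnum : W12num k ≤ k ^ 2 * (K k + 4 * ι₁ k) := by
    have := one_sub_sq_mul_K_le_E hk1
    rw [W12num, ι₂]
    linarith
  have hden : 0 < 3 * (k ^ (3 / 2 : ℝ) * (2 * ι₁ k) ^ (3 / 2 : ℝ)) := by
    have := rpow_pos_of_pos hk.1 (3 / 2)
    have := rpow_pos_of_pos (mul_pos two_pos hι) (3 / 2)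
    positivity
  calc W12 k = W12num k / (3 * (k * (2 * ι₁ k)) ^ (3 / 2 : ℝ)) := by
        rw [show k * (2 * ι₁ k) = 2 * k * ι₁ k by ring]; rfl
    _ = W12num k / (3 * (k ^ (3 / 2 : ℝ) * (2 * ι₁ k) ^ (3 / 2 : ℝ))) := by
        rw [mul_rpow hk.1.le (by positivity)]
    _ ≤ k ^ 2 * (K k + 4 * ι₁ k) / (3 * (k ^ (3 / 2 : ℝ) * (2 * ι₁ k) ^ (3 / 2 : ℝ))) :=
        div_le_div_of_nonneg_right hnum hden.le
    _ = k ^ (1 / 2 : ℝ) * ((K k + 4 * ι₁ k) / (3 * (2 * ι₁ k) ^ (3 / 2 : ℝ))) := by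
        have hk2 : k ^ 2 = k ^ (1 / 2 : ℝ) * k ^ (3 / 2 : ℝ) := by
          rw [← rpow_add hk.1]; norm_num
        have := rpow_pos_of_pos hk.1 (3 / 2)
        rw [hk2]
        field_simp

lemma tendsto_W12_nhdsGT_zero (hk₀ : k₀ ∈ Ioo 0 1) (hroot : ι₁ k₀ = 0) :
    Tendsto W12 (𝓝[>] 0) (𝓝 0) := by
  have h0 : |(0:ℝ)| < 1 := by simp
  have hι : ι₁ 0 = π / 2 := by rw [ι₁, K_zero, E_zero]; ring
  have hK := continuousAt_K h0
  have hι₁ := continuousAt_ι₁ h0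
  have hden : 3 * (2 * ι₁ 0) ^ (3 / 2 : ℝ) ≠ 0 := by rw [hι]; positivity
  have hbound : ContinuousAt
      (fun k => k ^ (1 / 2 : ℝ) * ((K k + 4 * ι₁ k) / (3 * (2 * ι₁ k) ^ (3 / 2 : ℝ)))) 0 := by
    fun_prop (disch := first | norm_num | exact hden)
  have : Tendsto
      (fun k => k ^ (1 / 2 : ℝ) * ((K k + 4 * ι₁ k) / (3 * (2 * ι₁ k) ^ (3 / 2 : ℝ)))) (𝓝 0)
      (𝓝 0) := by simpa using hbound.tendsto
  refine tendsto_of_tendsto_of_tendsto_of_le_of_le' tendsto_const_nhds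
    (this.mono_left nhdsWithin_le_nhds) ?_ ?_
  · filter_upwards [Ioo_mem_nhdsGT hk₀.1] with k hk
    exact (W12_pos hk₀.2 hroot hk).le
  · filter_upwards [Ioo_mem_nhdsGT hk₀.1] with k hk
    exact W12_le_rpow_half_mul hk₀.2 hroot hk

end W12

/-- `Y12` strictly decreases on `(0, k₀)` from `+∞` to `0`, `W12` strictly increases on
`(0, k₀)` from `0` to `+∞`, and the parametric curve `{(Y12(k), W12(k)) : k ∈ (0, k₀)}`
is the graph of a positive function `W_conj^{21}` strictly decreasing from `+∞` to `0`
on `(0, ∞)`. -/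
theorem curve_CI_graph (k₀ : ℝ) (hk₀ : k₀ ∈ Set.Ioo (0:ℝ) 1)
    (hroot : 2 * E k₀ - K k₀ = 0) :
    StrictAntiOn Y12 (Set.Ioo 0 k₀) ∧
    Tendsto Y12 (nhdsWithin 0 (Set.Ioi 0)) atTop ∧
    Tendsto Y12 (nhdsWithin k₀ (Set.Iio k₀)) (nhds 0) ∧
    StrictMonoOn W12 (Set.Ioo 0 k₀) ∧
    Tendsto W12 (nhdsWithin 0 (Set.Ioi 0)) (nhds 0) ∧
    Tendsto W12 (nhdsWithin k₀ (Set.Iio k₀)) atTop ∧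
    ∃ Wconj : ℝ → ℝ,
      (∀ Y ∈ Set.Ioi (0:ℝ), 0 < Wconj Y) ∧
      StrictAntiOn Wconj (Set.Ioi 0) ∧
      Tendsto Wconj (nhdsWithin 0 (Set.Ioi 0)) atTop ∧
      Tendsto Wconj atTop (nhds 0) ∧
      (fun k => (Y12 k, W12 k)) '' (Set.Ioo 0 k₀) =
        (fun Y => (Y, Wconj Y)) '' (Set.Ioi 0) := by
  have hY := strictAntiOn_Y12 hk₀.2 hroot
  have hY₀ := tendsto_Y12_nhdsGT_zero
  have hYk₀ := tendsto_Y12_nhdsLT hk₀ hroot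
  have hW := strictMonoOn_W12 hk₀.2 hroot
  have hW₀ := tendsto_W12_nhdsGT_zero hk₀ hroot
  have hWk₀ := tendsto_W12_nhdsLT hk₀ hroot
  have hYim : Y12 '' Ioo 0 k₀ = Ioi 0 :=
    image_Ioo_eq_Ioi_of_tendsto hk₀.1 (fun k hk => Y12_pos hk₀.2 hroot hk)
      (fun k hk => (continuousAt_Y12 hk.1.ne'
        (abs_lt_one_of_mem_Ico ⟨hk.1.le, hk.2.trans hk₀.2⟩)).continuousWithinAt) hY₀ hYk₀
  exact ⟨hY, hY₀, hYk₀, hW, hW₀, hWk₀,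
    hY.exists_graph_eq_image hYim hW (fun k hk => W12_pos hk₀.2 hroot hk) hW₀ hWk₀⟩
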